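/- arXiv:math/9807102 — 5 statements merged into one kernel-verified Lean document; each statement's English description precedes it below -/
import Mathlib

section
/- Suppose g : ℕ → ℂ is multiplicative and satisfies Condition (A) for some complex number κ and Condition (B). If Condition (C) holds with a real number β ≥ 0, then necessarily β ≥ |κ|. -/
open Filter Finset
open scoped ENNReal NNReal

/-- `g` is multiplicative: `g 1 = 1` and `g (m*n) = g m * g n` for coprime `m, n`. -/
def IsMult (g : ℕ → ℂ) : Prop :=
  g 1 = 1 ∧ ∀ m n : ℕ, Nat.Coprime m n → g (m * n) = g m * g n

/-- `M_g(x) = ∑_{n ≤ x} g(n)/n`. -/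
noncomputable def Mg (g : ℕ → ℂ) (x : ℝ) : ℂ :=
  ∑ n ∈ Finset.Icc 1 ⌊x⌋₊, g n / (n : ℂ)

/-- The finite set of primes `p ≤ x`. -/
noncomputable def primesLE (x : ℝ) : Finset ℕ :=
  (Finset.range (⌊x⌋₊ + 1)).filter Nat.Prime

/-- Condition (A): `∑_{p ≤ x} g(p) log p / p = κ log x + O(1)` for all `x ≥ 2`. -/
def CondA (g : ℕ → ℂ) (κ : ℂ) : Prop :=
  ∃ C : ℝ, ∀ x : ℝ, 2 ≤ x →
    ‖(∑ p ∈ primesLE x, g p * (Real.log p : ℂ) / (p : ℂ)) - κ * (Real.log x : ℂ)‖ ≤ C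

/-- Condition (B):
`∑_p (|g(p)| log p / p) ∑_{r≥1} |g(p^r)|/p^r + ∑_p ∑_{r≥2} |g(p^r)| log(p^r)/p^r < ∞`. -/
def CondB (g : ℕ → ℂ) : Prop :=
  (∑' p : Nat.Primes,
      ((‖g (p : ℕ)‖₊ : ℝ≥0∞) * ENNReal.ofReal (Real.log (p : ℕ)) / ((p : ℕ) : ℝ≥0∞)) *
        ∑' r : ℕ, (‖g ((p : ℕ) ^ (r + 1))‖₊ : ℝ≥0∞) / (((p : ℕ) ^ (r + 1) : ℕ) : ℝ≥0∞))
    + (∑' p : Nat.Primes, ∑' r : ℕ,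
        (‖g ((p : ℕ) ^ (r + 2))‖₊ : ℝ≥0∞) *
          ENNReal.ofReal (Real.log ((p : ℕ) ^ (r + 2) : ℕ)) /
          (((p : ℕ) ^ (r + 2) : ℕ) : ℝ≥0∞)) < ⊤

/-- Condition (C): `∏_{p ≤ x} (1 + |g(p)|/p) ≪ (log x)^β` for all `x ≥ 2`. -/
def CondC (g : ℕ → ℂ) (β : ℝ) : Prop :=
  ∃ C : ℝ, ∀ x : ℝ, 2 ≤ x →
    ∏ p ∈ primesLE x, (1 + ‖g p‖ / (p : ℝ)) ≤ C * Real.log x ^ β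

/-- The Euler factor `(1 - 1/p)^κ (1 + g(p)/p + g(p²)/p² + ⋯)` (principal branch power). -/
noncomputable def eulerFactor (g : ℕ → ℂ) (κ : ℂ) (p : ℕ) : ℂ :=
  (1 - 1 / (p : ℂ)) ^ κ * ∑' r : ℕ, g (p ^ r) / (p : ℂ) ^ r

/-!
Write `S(x) = ∑_{p ≤ x} |g(p)|/p`. By (A), `∑_{p ≤ e^j} g(p) log p / p = κ j + O(1)`, and on a
block `e^i < p ≤ e^(i+1)` we have `log p ≤ i + 1`; Abel summation over these blocks against the
weights `1/(i+1)` gives `|κ| log J ≤ |κ| H_J ≤ S(e^J) + O(1)`. Conversely `u - u² ≤ log(1 + u)`,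
and (B) makes `∑_p (|g(p)|/p)²` converge, so (C) yields `S(e^J) ≤ β log J + O(1)`. Letting
`J → ∞` gives `|κ| ≤ β`.
-/

lemma mem_primesLE {x : ℝ} (hx : 0 ≤ x) {p : ℕ} :
    p ∈ primesLE x ↔ p.Prime ∧ (p : ℝ) ≤ x := by
  rw [primesLE, mem_filter, mem_range, Nat.lt_succ_iff, Nat.le_floor_iff hx, and_comm]

lemma primesLE_mono {x y : ℝ} (h : x ≤ y) : primesLE x ⊆ primesLE y :=
  filter_subset_filter _ (range_subset_range.2 (Nat.succ_le_succ (Nat.floor_mono h)))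

lemma primesLE_one : primesLE 1 = ∅ := by
  ext p
  simp only [primesLE, Nat.floor_one, mem_filter, mem_range, notMem_empty, iff_false, not_and]
  intro hp
  interval_cases p <;> norm_num

noncomputable def primeLogSum (g : ℕ → ℂ) (x : ℝ) : ℂ :=
  ∑ p ∈ primesLE x, g p * (Real.log p : ℂ) / (p : ℂ)

noncomputable def primeNormSum (g : ℕ → ℂ) (x : ℝ) : ℝ :=
  ∑ p ∈ primesLE x, ‖g p‖ / p

section PrimeSums

variable (g : ℕ → ℂ)

lemma primeLogSum_one : primeLogSum g 1 = 0 := by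
  rw [primeLogSum, primesLE_one, sum_empty]

lemma primeNormSum_nonneg (x : ℝ) : 0 ≤ primeNormSum g x :=
  sum_nonneg fun _ _ ↦ by positivity

lemma norm_primeLogSum_sub_le {x y : ℝ} (hx : 0 ≤ x) (hxy : x ≤ y) :
    ‖primeLogSum g y - primeLogSum g x‖
      ≤ Real.log y * (primeNormSum g y - primeNormSum g x) := by
  have hsub := primesLE_mono hxy
  rw [primeLogSum, primeLogSum, primeNormSum, primeNormSum, ← sum_sdiff_eq_sub hsub,
    ← sum_sdiff_eq_sub hsub, mul_sum]
  refine (norm_sum_le _ _).trans (sum_le_sum fun p hp ↦ ?_)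
  obtain ⟨hp, hpy⟩ := (mem_primesLE (hx.trans hxy)).1 (mem_sdiff.1 hp).1
  have hlog : 0 ≤ Real.log p := Real.log_nonneg (by exact_mod_cast hp.one_le)
  rw [norm_div, norm_mul, Complex.norm_real, Real.norm_of_nonneg hlog, Complex.norm_natCast,
    mul_div_right_comm, mul_comm]
  gcongr
  exact_mod_cast hp.pos

end PrimeSums

section AbelSummation

variable {V : Type*} [NormedAddCommGroup V] [NormedSpace ℝ V]

lemma sum_range_smul_sub_eq (c : ℕ → ℝ) (E : ℕ → V) (J : ℕ) :
    ∑ i ∈ range J, c i • (E (i + 1) - E i)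
      = c J • E J - c 0 • E 0 + ∑ i ∈ range J, (c i - c (i + 1)) • E (i + 1) := by
  induction J with
  | zero => simp
  | succ J ih =>
    rw [sum_range_succ, ih, sum_range_succ, sub_smul, smul_sub]
    abel

lemma norm_sum_range_smul_sub_le {c : ℕ → ℝ} (hc : Antitone c) (hc0 : ∀ i, 0 ≤ c i)
    {E : ℕ → V} {C : ℝ} (hE : ∀ i, ‖E i‖ ≤ C) (J : ℕ) :
    ‖∑ i ∈ range J, c i • (E (i + 1) - E i)‖ ≤ 2 * C * c 0 := by
  have hdiff : ∀ i, 0 ≤ c i - c (i + 1) := fun i ↦ sub_nonneg.2 (hc (Nat.le_succ i))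
  have htail : ‖∑ i ∈ range J, (c i - c (i + 1)) • E (i + 1)‖ ≤ C * (c 0 - c J) := by
    rw [← sum_range_sub' c J, mul_sum]
    refine (norm_sum_le _ _).trans (sum_le_sum fun i _ ↦ ?_)
    rw [norm_smul, Real.norm_of_nonneg (hdiff i), mul_comm]
    exact mul_le_mul_of_nonneg_right (hE _) (hdiff i)
  have hterm : ∀ i, ‖c i • E i‖ ≤ C * c i := fun i ↦ by
    rw [norm_smul, Real.norm_of_nonneg (hc0 i), mul_comm]
    exact mul_le_mul_of_nonneg_right (hE i) (hc0 i)
  rw [sum_range_smul_sub_eq]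
  linarith [hterm J, hterm 0, norm_add_le (c J • E J - c 0 • E 0) (∑ i ∈ range J, (c i - c (i + 1)) • E (i + 1)),
    norm_sub_le (c J • E J) (c 0 • E 0)]

lemma norm_mul_harmonic_le {a : ℕ → V} {v : V} {C : ℝ} (ha : ∀ j, ‖a j - j • v‖ ≤ C)
    (J : ℕ) :
    ‖v‖ * harmonic J ≤ ∑ i ∈ range J, ‖a (i + 1) - a i‖ / (i + 1) + 2 * C := by
  set c : ℕ → ℝ := fun i ↦ ((i : ℝ) + 1)⁻¹
  have hc : Antitone c := fun i j hij ↦ by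
    dsimp only [c]; gcongr
  have hsplit : ∑ i ∈ range J, c i • v
      = ∑ i ∈ range J, c i • (a (i + 1) - a i)
        - ∑ i ∈ range J, c i • ((a (i + 1) - (i + 1) • v) - (a i - i • v)) := by
    rw [← sum_sub_distrib]
    refine sum_congr rfl fun i _ ↦ ?_
    rw [← smul_sub, succ_nsmul]
    congr 1
    abel
  have hharm : ‖v‖ * harmonic J = ‖∑ i ∈ range J, c i • v‖ := by
    rw [← sum_smul, norm_smul, Real.norm_of_nonneg (sum_nonneg fun i _ ↦ by positivity),
      mul_comm, harmonic]
    push_cast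
    rfl
  rw [hharm, hsplit]
  refine (norm_sub_le _ _).trans (add_le_add ((norm_sum_le _ _).trans (le_of_eq ?_)) ?_)
  · refine sum_congr rfl fun i _ ↦ ?_
    rw [norm_smul, Real.norm_of_nonneg (by positivity), div_eq_inv_mul]
  · simpa [c] using norm_sum_range_smul_sub_le hc (fun i ↦ by positivity)
      (E := fun i ↦ a i - i • v) ha J

end AbelSummation

lemma two_le_exp_natCast {j : ℕ} (hj : 1 ≤ j) : (2 : ℝ) ≤ Real.exp j := by
  have : (1 : ℝ) ≤ j := by exact_mod_cast hj
  linarith [Real.add_one_le_exp (j : ℝ)]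

lemma CondA.exists_norm_primeLogSum_exp_sub_le {g : ℕ → ℂ} {κ : ℂ} (hA : CondA g κ) :
    ∃ C : ℝ, ∀ j : ℕ, ‖primeLogSum g (Real.exp j) - j • κ‖ ≤ C := by
  obtain ⟨C, hC⟩ := hA
  refine ⟨C, fun j ↦ ?_⟩
  rcases Nat.eq_zero_or_pos j with rfl | hj
  · simpa [primeLogSum_one] using (norm_nonneg _).trans (hC 2 le_rfl)
  · simpa [primeLogSum, Real.log_exp, nsmul_eq_mul, mul_comm] using hC _ (two_le_exp_natCast hj)

lemma norm_mul_log_le_primeNormSum {g : ℕ → ℂ} {κ : ℂ} {C : ℝ}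
    (hA : ∀ j : ℕ, ‖primeLogSum g (Real.exp j) - j • κ‖ ≤ C) (J : ℕ) :
    ‖κ‖ * Real.log (J + 1) ≤ primeNormSum g (Real.exp J) + 2 * C := by
  have hstep : ∀ i : ℕ, ‖primeLogSum g (Real.exp (i + 1 : ℕ)) - primeLogSum g (Real.exp i)‖
      / (i + 1) ≤ primeNormSum g (Real.exp (i + 1 : ℕ)) - primeNormSum g (Real.exp i) := by
    intro i
    have h := norm_primeLogSum_sub_le g (Real.exp_pos i).le
      (Real.exp_le_exp.2 (Nat.cast_le.2 (Nat.le_add_right i 1)))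
    rw [Real.log_exp] at h
    rw [div_le_iff₀' (by positivity)]
    exact_mod_cast h
  have htel := sum_range_sub (fun j : ℕ ↦ primeNormSum g (Real.exp j)) J
  calc ‖κ‖ * Real.log (J + 1)
      ≤ ‖κ‖ * harmonic J := by
        gcongr
        exact_mod_cast log_add_one_le_harmonic J
    _ ≤ ∑ i ∈ range J, (primeNormSum g (Real.exp (i + 1 : ℕ)) - primeNormSum g (Real.exp i))
          + 2 * C := by
        refine (norm_mul_harmonic_le hA J).trans ?_
        gcongr with i
        exact hstep i
    _ ≤ primeNormSum g (Real.exp J) + 2 * C := by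
        rw [htel]
        linarith [primeNormSum_nonneg g (Real.exp (0 : ℕ))]

lemma sub_sq_le_log_one_add {u : ℝ} (hu : 0 ≤ u) : u - u ^ 2 ≤ Real.log (1 + u) := by
  have h1u : (0 : ℝ) < 1 + u := by linarith
  have hinv : u - u ^ 2 ≤ 1 - (1 + u)⁻¹ := by
    rw [show 1 - (1 + u)⁻¹ = u / (1 + u) by field_simp; ring, le_div_iff₀ h1u]
    nlinarith [pow_nonneg hu 3]
  exact hinv.trans (Real.one_sub_inv_le_log_of_pos h1u)

lemma sum_le_log_prod_one_add_add_sum_sq {ι : Type*} (s : Finset ι) {u : ι → ℝ}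
    (hu : ∀ i ∈ s, 0 ≤ u i) :
    ∑ i ∈ s, u i ≤ Real.log (∏ i ∈ s, (1 + u i)) + ∑ i ∈ s, u i ^ 2 := by
  rw [Real.log_prod fun i hi ↦ by linarith [hu i hi], ← sum_add_distrib]
  exact sum_le_sum fun i hi ↦ by linarith [sub_sq_le_log_one_add (hu i hi)]

lemma CondB.summable_sq {g : ℕ → ℂ} (hB : CondB g) :
    Summable fun p : Nat.Primes ↦ (‖g p‖ / p) ^ 2 := by
  set f : Nat.Primes → ℝ≥0 := fun p ↦ (‖g p‖₊ / (p : ℕ)) ^ 2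
  -- keep only the `r = 0` term of the inner series, and use `log 2 ≤ log p`
  have hf : ∀ p : Nat.Primes, ENNReal.ofReal (Real.log 2) * f p
      ≤ (‖g p‖₊ : ℝ≥0∞) * ENNReal.ofReal (Real.log (p : ℕ)) / ((p : ℕ) : ℝ≥0∞) *
        ∑' r : ℕ, (‖g ((p : ℕ) ^ (r + 1))‖₊ : ℝ≥0∞) / (((p : ℕ) ^ (r + 1) : ℕ) : ℝ≥0∞) := by
    intro p
    have hp0 : ((p : ℕ) : ℝ≥0) ≠ 0 := by exact_mod_cast p.prop.ne_zero
    have hlog : ENNReal.ofReal (Real.log 2) ≤ ENNReal.ofReal (Real.log (p : ℕ)) :=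
      ENNReal.ofReal_le_ofReal
        (Real.log_le_log two_pos (by exact_mod_cast p.prop.two_le))
    have hfirst := ENNReal.le_tsum (f := fun r : ℕ ↦
      (‖g ((p : ℕ) ^ (r + 1))‖₊ : ℝ≥0∞) / (((p : ℕ) ^ (r + 1) : ℕ) : ℝ≥0∞)) 0
    simp only [zero_add, pow_one] at hfirst
    calc ENNReal.ofReal (Real.log 2) * f p
        = ENNReal.ofReal (Real.log 2) * ‖g p‖₊ / (p : ℕ) * (‖g p‖₊ / (p : ℕ)) := by
          simp only [f, sq, ENNReal.coe_mul, ENNReal.coe_div hp0, ENNReal.coe_natCast,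
            mul_div_assoc, mul_assoc]
      _ ≤ _ := by
          rw [mul_comm (ENNReal.ofReal _)]
          gcongr
  have hlog2 : ENNReal.ofReal (Real.log 2) ≠ 0 := by
    simpa using Real.log_pos one_lt_two
  have hsum : ∑' p, (f p : ℝ≥0∞) ≠ ⊤ := by
    intro htop
    refine (le_self_add.trans_lt hB).ne ?_
    rw [eq_top_iff, ← ENNReal.mul_top hlog2, ← htop, ← ENNReal.tsum_mul_left]
    exact ENNReal.tsum_le_tsum hf
  simpa [f, div_pow] using NNReal.summable_coe.2 (ENNReal.tsum_coe_ne_top_iff_summable.1 hsum)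

lemma CondB.sum_primesLE_sq_le_tsum {g : ℕ → ℂ} (hB : CondB g) (x : ℝ) :
    ∑ p ∈ primesLE x, (‖g p‖ / p) ^ 2 ≤ ∑' p : Nat.Primes, (‖g p‖ / p) ^ 2 := by
  have h := hB.summable_sq.sum_le_tsum (ι := Nat.Primes) ((primesLE x).subtype Nat.Prime)
    fun _ _ ↦ sq_nonneg _
  exact (sum_subtype_of_mem (s := primesLE x) (fun p : ℕ ↦ (‖g p‖ / p) ^ 2)
    fun p hp ↦ (mem_filter.1 hp).2).symm.trans_le h

lemma CondC.exists_primeNormSum_exp_le {g : ℕ → ℂ} {β : ℝ} (hC : CondC g β) (hB : CondB g) :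
    ∃ K : ℝ, ∀ J : ℕ, 1 ≤ J → primeNormSum g (Real.exp J) ≤ β * Real.log J + K := by
  obtain ⟨C, hC⟩ := hC
  refine ⟨Real.log C + ∑' p : Nat.Primes, (‖g p‖ / p) ^ 2, fun J hJ ↦ ?_⟩
  have hJ0 : (0 : ℝ) < J := by exact_mod_cast hJ
  have hprod := hC _ (two_le_exp_natCast hJ)
  rw [Real.log_exp] at hprod
  have hprod0 : 0 < ∏ p ∈ primesLE (Real.exp J), (1 + ‖g p‖ / (p : ℝ)) :=
    prod_pos fun p _ ↦ by positivity
  have hC0 : 0 < C := pos_of_mul_pos_left (hprod0.trans_le hprod) (by positivity)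
  have hlog : Real.log (∏ p ∈ primesLE (Real.exp J), (1 + ‖g p‖ / (p : ℝ)))
      ≤ Real.log C + β * Real.log J := by
    rw [← Real.log_rpow hJ0, ← Real.log_mul hC0.ne' (by positivity)]
    exact Real.log_le_log hprod0 hprod
  rw [primeNormSum]
  linarith [sum_le_log_prod_one_add_add_sum_sq (primesLE (Real.exp J))
    (u := fun p ↦ ‖g p‖ / p) fun p _ ↦ by positivity, hB.sum_primesLE_sq_le_tsum (Real.exp J)]

lemma le_of_eventually_mul_log_le {a b K : ℝ}
    (h : ∀ᶠ n : ℕ in atTop, a * Real.log n ≤ b * Real.log n + K) : a ≤ b := by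
  by_contra! hab
  have hlim : Tendsto (fun n : ℕ ↦ (a - b) * Real.log n) atTop atTop :=
    (Real.tendsto_log_atTop.comp tendsto_natCast_atTop_atTop).const_mul_atTop (sub_pos.2 hab)
  obtain ⟨n, hn, hK⟩ := (h.and (hlim.eventually_gt_atTop K)).exists
  linarith

theorem stmt4_general (g : ℕ → ℂ) (κ : ℂ) (β : ℝ)
    (hA : CondA g κ) (hB : CondB g)
    (hC : CondC g β) :
    ‖κ‖ ≤ β := by
  obtain ⟨C, hAC⟩ := hA.exists_norm_primeLogSum_exp_sub_le
  obtain ⟨K, hK⟩ := hC.exists_primeNormSum_exp_le hB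
  refine le_of_eventually_mul_log_le (K := K + 2 * C) ?_
  filter_upwards [eventually_ge_atTop 1] with J hJ
  have hlog : Real.log J ≤ Real.log (J + 1) :=
    Real.log_le_log (by exact_mod_cast hJ) (by linarith)
  calc ‖κ‖ * Real.log J ≤ ‖κ‖ * Real.log (J + 1) := by gcongr
    _ ≤ primeNormSum g (Real.exp J) + 2 * C := norm_mul_log_le_primeNormSum hAC J
    _ ≤ β * Real.log J + (K + 2 * C) := by linarith [hK J hJ]

theorem stmt4 (g : ℕ → ℂ) (κ : ℂ) (β : ℝ) (hg : IsMult g)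
    (hA : CondA g κ) (hB : CondB g)
    (hβ0 : 0 ≤ β) (hC : CondC g β) :
    ‖κ‖ ≤ β :=
  stmt4_general g κ β hA hB hC
end

section
/- Suppose g : ℕ → ℝ is a nonnegative multiplicative function and there is a real number κ ≥ 0 such that ∑_{p ≤ x} g(p) log p / p = κ log x + O(1) for all x ≥ 2. Then ∏_{p ≤ x} (1 + g(p)/p) ≪ (log x)^κ for all x ≥ 2; that is, Condition (C) holds with β = κ. -/
open Filter Finset

/-!
Partial summation turns the upper bound `∑_{p ≤ x} g(p) log p / p ≤ κ log x + C` into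
`∑_{p ≤ x} g(p) / p ≤ κ log log x + O(1)`, and `1 + t ≤ exp t` then bounds the product by
`exp (κ log log x + O(1)) ≪ (log x)^κ`.
-/

lemma primesLE_eq_filter_Icc (x : ℝ) : primesLE x = (Icc 2 ⌊x⌋₊).filter Nat.Prime := by
  ext p
  simp only [primesLE, mem_filter, mem_range, mem_Icc]
  constructor
  · rintro ⟨hp, hprime⟩
    exact ⟨⟨hprime.two_le, by omega⟩, hprime⟩
  · rintro ⟨⟨-, hp⟩, hprime⟩
    exact ⟨by omega, hprime⟩

lemma sum_primesLE_eq_sum_Icc (f : ℕ → ℝ) (x : ℝ) :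
    ∑ p ∈ primesLE x, f p = ∑ k ∈ Icc 2 ⌊x⌋₊, if k.Prime then f k else 0 := by
  rw [primesLE_eq_filter_Icc, sum_filter]

section PartialSummation

open Real

variable (a : ℕ → ℝ) (κ C : ℝ)

/-- The invariant of the partial summation: it is nonincreasing in `n` as long as
`∑_{2 ≤ k ≤ n} a k log k ≤ κ log n + C`. -/
noncomputable def partialSumDefect (n : ℕ) : ℝ :=
  ∑ k ∈ Icc 2 n, a k - (∑ k ∈ Icc 2 n, a k * log k - C) / log n - κ * log (log n)

variable {a κ C}

lemma partialSumDefect_two : partialSumDefect a κ C 2 = C / log 2 - κ * log (log 2) := by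
  have hlog2 : log 2 ≠ 0 := (log_pos one_lt_two).ne'
  simp only [partialSumDefect, Icc_self, sum_singleton, Nat.cast_ofNat]
  field_simp
  ring

lemma partialSumDefect_succ_le (hκ : 0 ≤ κ) {n : ℕ} (hn : 2 ≤ n)
    (hA : ∑ k ∈ Icc 2 n, a k * log k ≤ κ * log n + C) :
    partialSumDefect a κ C (n + 1) ≤ partialSumDefect a κ C n := by
  have hL : 0 < log n := log_pos (by exact_mod_cast hn)
  have hLL' : log n ≤ log (n + 1) := log_le_log (by positivity) (by linarith)
  have hL' : 0 < log (n + 1) := hL.trans_le hLL'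
  have hdiff : partialSumDefect a κ C (n + 1) - partialSumDefect a κ C n
      = (∑ k ∈ Icc 2 n, a k * log k - C) * (1 / log n - 1 / log (n + 1))
        - κ * (log (log (n + 1)) - log (log n)) := by
    simp only [partialSumDefect, sum_Icc_succ_top (show 2 ≤ n + 1 by omega), Nat.cast_add_one]
    field_simp
    ring
  generalize log n = L, log ((n : ℝ) + 1) = L' at *
  have hloglog : 1 - L / L' ≤ log L' - log L := by
    have := one_sub_inv_le_log_of_pos (div_pos hL' hL)
    rwa [inv_div, log_div hL'.ne' hL.ne'] at this
  have hweight : 0 ≤ 1 / L - 1 / L' := sub_nonneg.2 (one_div_le_one_div_of_le hL hLL')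
  have hκL : κ * L * (1 / L - 1 / L') = κ * (1 - L / L') := by field_simp
  linarith [mul_le_mul_of_nonneg_right
      (show ∑ k ∈ Icc 2 n, a k * log k - C ≤ κ * L by linarith) hweight,
    mul_le_mul_of_nonneg_left hloglog hκ]

theorem sum_Icc_floor_le_of_sum_mul_log_le (hκ : 0 ≤ κ)
    (hA : ∀ n, 2 ≤ n → ∑ k ∈ Icc 2 n, a k * log k ≤ κ * log n + C) {x : ℝ} (hx : 2 ≤ x) :
    ∑ k ∈ Icc 2 ⌊x⌋₊, a k ≤ κ * log (log x) + (κ + C / log 2 - κ * log (log 2)) := by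
  have hdefect (n : ℕ) (hn : 2 ≤ n) : partialSumDefect a κ C n ≤ partialSumDefect a κ C 2 := by
    induction n, hn using Nat.le_induction with
    | base => rfl
    | succ n hn ih => exact (partialSumDefect_succ_le hκ hn (hA n hn)).trans ih
  have hn : 2 ≤ ⌊x⌋₊ := Nat.le_floor (by exact_mod_cast hx)
  have hL : 0 < log ⌊x⌋₊ := log_pos (by exact_mod_cast hn)
  have hratio : (∑ k ∈ Icc 2 ⌊x⌋₊, a k * log k - C) / log ⌊x⌋₊ ≤ κ := by
    rw [div_le_iff₀ hL]
    linarith [hA _ hn]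
  have hloglog : log (log ⌊x⌋₊) ≤ log (log x) :=
    log_le_log hL (log_le_log (by positivity) (Nat.floor_le (by linarith)))
  have hbound := hdefect _ hn
  rw [partialSumDefect_two] at hbound
  unfold partialSumDefect at hbound
  linarith [mul_le_mul_of_nonneg_left hloglog hκ]

end PartialSummation

theorem stmt5_general (g : ℕ → ℝ) (κ : ℝ)
    (hnonneg : ∀ n : ℕ, 0 ≤ g n) (hκ : 0 ≤ κ)
    (hA : ∃ C : ℝ, ∀ x : ℝ, 2 ≤ x →
      |(∑ p ∈ primesLE x, g p * Real.log p / (p : ℝ)) - κ * Real.log x| ≤ C) :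
    ∃ C : ℝ, ∀ x : ℝ, 2 ≤ x →
      ∏ p ∈ primesLE x, (1 + g p / (p : ℝ)) ≤ C * Real.log x ^ κ := by
  obtain ⟨C, hC⟩ := hA
  set a : ℕ → ℝ := fun k ↦ if k.Prime then g k / k else 0
  have hA' (n : ℕ) (hn : 2 ≤ n) : ∑ k ∈ Icc 2 n, a k * Real.log k ≤ κ * Real.log n + C := by
    have h := (abs_le.1 (hC n (by exact_mod_cast hn))).2
    rw [sum_primesLE_eq_sum_Icc, Nat.floor_natCast] at h
    simp only [a, ite_mul, zero_mul, div_mul_eq_mul_div]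
    linarith
  refine ⟨Real.exp (κ + C / Real.log 2 - κ * Real.log (Real.log 2)), fun x hx ↦ ?_⟩
  calc ∏ p ∈ primesLE x, (1 + g p / (p : ℝ))
      ≤ Real.exp (∑ k ∈ Icc 2 ⌊x⌋₊, a k) := by
        rw [← sum_primesLE_eq_sum_Icc]
        exact Real.prod_one_add_le_exp_sum _ fun p ↦ div_nonneg (hnonneg p) p.cast_nonneg
    _ ≤ Real.exp (κ * Real.log (Real.log x) + (κ + C / Real.log 2 - κ * Real.log (Real.log 2))) :=
        Real.exp_le_exp.2 (sum_Icc_floor_le_of_sum_mul_log_le hκ hA' hx)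
    _ = Real.exp (κ + C / Real.log 2 - κ * Real.log (Real.log 2)) * Real.log x ^ κ := by
        rw [Real.rpow_def_of_pos (Real.log_pos (by linarith)), ← Real.exp_add]
        ring_nf

theorem stmt5 (g : ℕ → ℝ) (κ : ℝ)
    (hg : g 1 = 1 ∧ ∀ m n : ℕ, Nat.Coprime m n → g (m * n) = g m * g n)
    (hnonneg : ∀ n : ℕ, 0 ≤ g n) (hκ : 0 ≤ κ)
    (hA : ∃ C : ℝ, ∀ x : ℝ, 2 ≤ x →
      |(∑ p ∈ primesLE x, g p * Real.log p / (p : ℝ)) - κ * Real.log x| ≤ C) :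
    ∃ C : ℝ, ∀ x : ℝ, 2 ≤ x →
      ∏ p ∈ primesLE x, (1 + g p / (p : ℝ)) ≤ C * Real.log x ^ κ :=
  stmt5_general g κ hnonneg hκ hA
end

section
/- Let g : ℕ → ℂ be multiplicative. Then for every real x ≥ 1, ∑_{n ≤ x} g(n) log n / n = ∑_{r ≥ 1} ∑_{p ≤ x^{1/r}} (g(p^r) log(p^r) / p^r) · ∑_{m ≤ x/p^r, p ∤ m} g(m)/m, where the inner sums run over primes p with p^r ≤ x and over positive integers m ≤ x/p^r not divisible by p. -/
/-!
Write `log n = ∑_{p^r ∥ n} log p^r`, a sum over the primes `p ∣ n` with `r = v_p(n)`, and swap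
the order of summation. For a fixed prime power `p^r`, the `n ≤ N` with `v_p(n) = r` are exactly
the `p^r m` with `m ≤ N / p^r` and `p ∤ m`, and `g (p^r m) = g (p^r) g m` by multiplicativity.
Since `⌊x / p^r⌋ = ⌊⌊x⌋ / p^r⌋`, both sides depend on `x` only through `⌊x⌋`.
-/

open Filter Finset
open scoped ENNReal NNReal

open Real in
lemma log_natCast_eq_sum_log_prime_pow_factorization {N n : ℕ} (hn : n ∈ Icc 1 N) :
    log n = ∑ pr ∈ (Icc 1 N ×ˢ Icc 1 N).filter
        (fun pr : ℕ × ℕ => pr.1.Prime ∧ n.factorization pr.1 = pr.2),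
      log ((pr.1 : ℝ) ^ pr.2) := by
  obtain ⟨hn1, hnN⟩ := mem_Icc.mp hn
  have hn0 : n ≠ 0 := by omega
  rw [log_nat_eq_sum_factorization, Finsupp.sum, Nat.support_factorization]
  refine sum_nbij' (fun p => (p, n.factorization p)) Prod.fst ?_ ?_ (fun _ _ => rfl) ?_ ?_
  · intro p hp
    have hp' := Nat.prime_of_mem_primeFactors hp
    have hpos := hp'.factorization_pos_of_dvd hn0 (Nat.dvd_of_mem_primeFactors hp)
    have hpn := Nat.le_of_mem_primeFactors hp
    simp only [mem_filter, mem_product, mem_Icc, and_true]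
    exact ⟨⟨⟨hp'.one_le, hpn.trans hnN⟩, hpos, (Nat.factorization_lt p hn0).le.trans hnN⟩,
      hp'⟩
  · rintro ⟨p, r⟩ hpr
    simp only [mem_filter, mem_product, mem_Icc] at hpr
    obtain ⟨⟨-, hr, -⟩, hp, rfl⟩ := hpr
    exact Nat.mem_primeFactors.mpr
      ⟨hp, Nat.dvd_of_factorization_pos (Nat.one_le_iff_ne_zero.mp hr), hn0⟩
  · rintro ⟨p, r⟩ hpr
    simp only [mem_filter] at hpr
    rw [hpr.2.2]
  · intro p _
    rw [log_pow]

lemma sum_filter_factorization_eq_sum_filter_not_dvd {M : Type*} [AddCommMonoid M]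
    (f : ℕ → M) {p : ℕ} (hp : p.Prime) (r N : ℕ) :
    ∑ n ∈ (Icc 1 N).filter (fun n => n.factorization p = r), f n =
      ∑ m ∈ (Icc 1 (N / p ^ r)).filter (fun m => ¬ p ∣ m), f (p ^ r * m) := by
  have hpr : 0 < p ^ r := pow_pos hp.pos r
  symm
  refine sum_nbij' (p ^ r * ·) (· / p ^ r) ?_ ?_ ?_ ?_ (fun _ _ => rfl)
  · intro m hm
    simp only [mem_filter, mem_Icc] at hm ⊢
    obtain ⟨⟨hm1, hmN⟩, hpm⟩ := hm
    refine ⟨⟨Nat.one_le_iff_ne_zero.mpr (by positivity), ?_⟩, ?_⟩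
    · rw [mul_comm]; exact (Nat.le_div_iff_mul_le hpr).mp hmN
    · rw [Nat.factorization_mul hpr.ne' (by omega), Finsupp.add_apply, hp.factorization_pow,
        Finsupp.single_eq_same, Nat.factorization_eq_zero_of_not_dvd hpm, add_zero]
  · intro n hn
    simp only [mem_filter, mem_Icc] at hn ⊢
    obtain ⟨⟨hn1, hnN⟩, rfl⟩ := hn
    exact ⟨⟨Nat.ordCompl_pos p (by omega), Nat.div_le_div_right hnN⟩,
      Nat.not_dvd_ordCompl hp (by omega)⟩
  · intro m _
    exact Nat.mul_div_cancel_left m hpr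
  · intro n hn
    simp only [mem_filter] at hn
    rw [← hn.2]
    exact Nat.mul_div_cancel' (Nat.ordProj_dvd n p)

theorem sum_mul_log_div_eq_sum_prime_pow (g : ℕ → ℂ) (hg : IsMult g) (N : ℕ) :
    ∑ n ∈ Icc 1 N, g n * (Real.log n : ℂ) / (n : ℂ) =
      ∑ pr ∈ (Icc 1 N ×ˢ Icc 1 N).filter (fun pr => pr.1.Prime ∧ pr.1 ^ pr.2 ≤ N),
        g (pr.1 ^ pr.2) * (Real.log ((pr.1 : ℝ) ^ pr.2) : ℂ) / ((pr.1 : ℂ) ^ pr.2) *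
          ∑ m ∈ (Icc 1 (N / pr.1 ^ pr.2)).filter (fun m => ¬ pr.1 ∣ m), g m / (m : ℂ) := by
  have hlog : ∀ n ∈ Icc 1 N, g n * (Real.log n : ℂ) / (n : ℂ) =
      ∑ pr ∈ (Icc 1 N ×ˢ Icc 1 N).filter
          (fun pr : ℕ × ℕ => pr.1.Prime ∧ n.factorization pr.1 = pr.2),
        g n * (Real.log ((pr.1 : ℝ) ^ pr.2) : ℂ) / (n : ℂ) := by
    intro n hn
    rw [log_natCast_eq_sum_log_prime_pow_factorization hn]
    push_cast
    rw [mul_sum, sum_div]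
  rw [sum_congr rfl hlog, sum_comm' (t' := (Icc 1 N ×ˢ Icc 1 N).filter
      (fun pr => pr.1.Prime ∧ pr.1 ^ pr.2 ≤ N))
    (s' := fun pr => (Icc 1 N).filter (fun n => n.factorization pr.1 = pr.2))]
  · refine sum_congr rfl fun ⟨p, r⟩ hpr => ?_
    have hp : p.Prime := (mem_filter.mp hpr).2.1
    rw [sum_filter_factorization_eq_sum_filter_not_dvd _ hp, mul_sum]
    refine sum_congr rfl fun m hm => ?_
    have hcop : Nat.Coprime (p ^ r) m :=
      ((hp.coprime_iff_not_dvd).mpr (mem_filter.mp hm).2).pow_left r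
    rw [hg.2 _ _ hcop]
    push_cast
    ring
  · rintro n ⟨p, r⟩
    simp only [mem_filter, mem_product, mem_Icc]
    constructor
    · rintro ⟨⟨hn1, hnN⟩, hpr, hp, rfl⟩
      exact ⟨⟨⟨hn1, hnN⟩, rfl⟩, hpr, hp, (Nat.ordProj_le p (by omega)).trans hnN⟩
    · rintro ⟨⟨hn, hr⟩, hpr, hp, -⟩
      exact ⟨hn, hpr, hp, hr⟩

theorem stmt7_general (g : ℕ → ℂ) (hg : IsMult g) (x : ℝ) :
    ∑ n ∈ Finset.Icc 1 ⌊x⌋₊, g n * (Real.log n : ℂ) / (n : ℂ) =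
      ∑ pr ∈ ((Finset.Icc 1 ⌊x⌋₊) ×ˢ (Finset.Icc 1 ⌊x⌋₊)).filter
          (fun pr => pr.1.Prime ∧ pr.1 ^ pr.2 ≤ ⌊x⌋₊),
        g (pr.1 ^ pr.2) * (Real.log ((pr.1 : ℝ) ^ pr.2) : ℂ) / ((pr.1 : ℂ) ^ pr.2) *
          ∑ m ∈ (Finset.Icc 1 ⌊x / (pr.1 : ℝ) ^ pr.2⌋₊).filter (fun m => ¬ pr.1 ∣ m),
            g m / (m : ℂ) := by
  simp only [← Nat.cast_pow, Nat.floor_div_natCast]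
  exact_mod_cast sum_mul_log_div_eq_sum_prime_pow g hg ⌊x⌋₊

/-- The identity `∑_{n ≤ x} g(n) log n / n
= ∑_{r ≥ 1} ∑_{p ≤ x^{1/r}} (g(p^r) log p^r / p^r) ∑_{m ≤ x/p^r, p ∤ m} g(m)/m`,
where the condition `p ≤ x^{1/r}` is expressed as `p^r ≤ ⌊x⌋₊` and pairs `(p, r)` range
over the (sufficiently large) finite set `Icc 1 ⌊x⌋₊ ×ˢ Icc 1 ⌊x⌋₊`. -/
theorem stmt7 (g : ℕ → ℂ) (hg : IsMult g) (x : ℝ) (hx : 1 ≤ x) :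
    ∑ n ∈ Finset.Icc 1 ⌊x⌋₊, g n * (Real.log n : ℂ) / (n : ℂ) =
      ∑ pr ∈ ((Finset.Icc 1 ⌊x⌋₊) ×ˢ (Finset.Icc 1 ⌊x⌋₊)).filter
          (fun pr => pr.1.Prime ∧ pr.1 ^ pr.2 ≤ ⌊x⌋₊),
        g (pr.1 ^ pr.2) * (Real.log ((pr.1 : ℝ) ^ pr.2) : ℂ) / ((pr.1 : ℂ) ^ pr.2) *
          ∑ m ∈ (Finset.Icc 1 ⌊x / (pr.1 : ℝ) ^ pr.2⌋₊).filter (fun m => ¬ pr.1 ∣ m),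
            g m / (m : ℂ) :=
  stmt7_general g hg x
end

section
/- Suppose g : ℕ → ℂ is multiplicative, that ∑_p ∑_{r=2}^∞ |g(p^r)|/p^r < ∞, and that Condition (C) holds with some β ≥ 0. Then ∑_{m ≤ x} |g(m)|/m ≪_g (log x)^β for all x ≥ 2. -/
open Filter Finset
open scoped ENNReal NNReal

/-!
The function `m ↦ ‖g m‖ / m` is nonnegative and multiplicative, so its partial sum up to `x` is
bounded by the truncated Euler product `∏_{p ≤ x} ∑_k ‖g (p^k)‖ / p^k`. Each factor is
`1 + ‖g p‖ / p + T_p ≤ (1 + ‖g p‖ / p) * exp T_p`, where `T_p` collects the prime powers `p^r`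
with `r ≥ 2`. The product of the first factors is controlled by Condition (C), and
`∑_p T_p` converges by hypothesis.
-/

lemma sum_Icc_le_prod_primesBelow_tsum_pow {f : ℕ → ℝ} (hf₀ : ∀ n, 0 ≤ f n) (hf₁ : f 1 = 1)
    (hmul : ∀ {m n : ℕ}, m.Coprime n → f (m * n) = f m * f n)
    (hsum : ∀ {p : ℕ}, p.Prime → Summable fun k : ℕ ↦ f (p ^ k)) (n : ℕ) :
    ∑ m ∈ Icc 1 n, f m ≤ ∏ p ∈ (n + 1).primesBelow, ∑' k : ℕ, f (p ^ k) := by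
  have hnorm : ∀ {p : ℕ}, p.Prime → Summable fun k : ℕ ↦ ‖f (p ^ k)‖ := fun hp ↦
    (hsum hp).congr fun k ↦ (Real.norm_of_nonneg (hf₀ _)).symm
  have hprod := (EulerProduct.summable_and_hasSum_smoothNumbers_prod_primesBelow_tsum
    hf₁ hmul hnorm (n + 1)).2
  replace hprod := hasSum_subtype_iff_indicator.mp hprod
  have hsmooth : ∀ m ∈ Icc 1 n, m ∈ (n + 1).smoothNumbers := fun m hm ↦
    Nat.mem_smoothNumbers_of_lt (by grind) (by grind)
  calc ∑ m ∈ Icc 1 n, f m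
      = ∑ m ∈ Icc 1 n, ((n + 1).smoothNumbers : Set ℕ).indicator f m :=
        sum_congr rfl fun m hm ↦ (Set.indicator_of_mem (hsmooth m hm) f).symm
    _ ≤ _ := sum_le_hasSum _ (fun m _ ↦ Set.indicator_nonneg (fun m _ ↦ hf₀ m) m) hprod

lemma tsum_le_one_add_mul_exp_tsum_add_two {a : ℕ → ℝ} (ha₀ : ∀ k, 0 ≤ a k) (ha : Summable a)
    (ha₁ : a 0 = 1) : ∑' k, a k ≤ (1 + a 1) * Real.exp (∑' k, a (k + 2)) := by
  rw [ha.tsum_eq_zero_add, ((summable_nat_add_iff 1).2 ha).tsum_eq_zero_add, ha₁]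
  have hT : 0 ≤ ∑' k, a (k + 2) := tsum_nonneg fun k ↦ ha₀ _
  have hexp := Real.add_one_le_exp (∑' k, a (k + 2))
  nlinarith [ha₀ 1]

lemma sum_primesBelow_le_tsum_primes {f : ℕ → ℝ} (hf₀ : ∀ p, 0 ≤ f p)
    (hf : Summable fun p : Nat.Primes ↦ f p) (n : ℕ) :
    ∑ p ∈ n.primesBelow, f p ≤ ∑' p : Nat.Primes, f p := by
  rw [Nat.primesBelow, ← sum_subtype_eq_sum_filter]
  exact Summable.sum_le_tsum (ι := Nat.Primes) _ (fun p _ ↦ hf₀ p) hf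

lemma ENNReal.summable_toReal_tsum {ι κ : Type*} {u : ι → κ → ℝ≥0∞}
    (hu : ∑' i, ∑' j, u i j ≠ ⊤) :
    (∀ i, Summable fun j ↦ (u i j).toReal) ∧ Summable fun i ↦ ∑' j, (u i j).toReal := by
  have hi : ∀ i, ∑' j, u i j ≠ ⊤ := fun i ↦ ne_top_of_le_ne_top hu (ENNReal.le_tsum i)
  refine ⟨fun i ↦ ENNReal.summable_toReal (hi i), (ENNReal.summable_toReal hu).congr fun i ↦ ?_⟩
  exact ENNReal.tsum_toReal_eq fun j ↦ ne_top_of_le_ne_top (hi i) (ENNReal.le_tsum j)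

theorem stmt11_general (g : ℕ → ℂ) (β : ℝ) (hg : IsMult g)
    (hhigher : (∑' p : Nat.Primes, ∑' r : ℕ,
        (‖g ((p : ℕ) ^ (r + 2))‖₊ : ℝ≥0∞) / (((p : ℕ) ^ (r + 2) : ℕ) : ℝ≥0∞)) < ⊤)
    (hC : CondC g β) :
    ∃ C : ℝ, ∀ x : ℝ, 2 ≤ x →
      (∑ m ∈ Finset.Icc 1 ⌊x⌋₊, ‖g m‖ / (m : ℝ)) ≤ C * Real.log x ^ β := by
  set F : ℕ → ℝ := fun m ↦ ‖g m‖ / m with hF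
  have hF₀ : ∀ m, 0 ≤ F m := fun m ↦ by positivity
  have hF₁ : F 1 = 1 := by simp [hF, hg.1]
  have hFmul : ∀ {m n : ℕ}, m.Coprime n → F (m * n) = F m * F n := fun h ↦ by
    simp only [hF, hg.2 _ _ h, norm_mul, Nat.cast_mul, mul_div_mul_comm]
  have htoReal : ∀ n : ℕ, ((‖g n‖₊ : ℝ≥0∞) / (n : ℝ≥0∞)).toReal = F n := fun n ↦ by
    simp [hF, ENNReal.toReal_div]
  obtain ⟨htail, hT⟩ := ENNReal.summable_toReal_tsum hhigher.ne
  simp only [htoReal] at htail hT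
  have hpow : ∀ {p : ℕ}, p.Prime → Summable fun k ↦ F (p ^ k) := fun hp ↦
    (summable_nat_add_iff 2).mp (htail ⟨_, hp⟩)
  obtain ⟨C, hC⟩ := hC
  set S := ∑' p : Nat.Primes, ∑' r, F (p ^ (r + 2))
  refine ⟨C * Real.exp S, fun x hx ↦ ?_⟩
  set N := ⌊x⌋₊ + 1
  have hprod : ∏ p ∈ N.primesBelow, (1 + F p) ≤ C * Real.log x ^ β := hC x hx
  have hCx : 0 ≤ C * Real.log x ^ β :=
    (prod_nonneg fun p _ ↦ add_nonneg zero_le_one (hF₀ p)).trans hprod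
  calc ∑ m ∈ Icc 1 ⌊x⌋₊, F m ≤ ∏ p ∈ N.primesBelow, ∑' k, F (p ^ k) :=
        sum_Icc_le_prod_primesBelow_tsum_pow hF₀ hF₁ hFmul hpow _
    _ ≤ ∏ p ∈ N.primesBelow, (1 + F p) * Real.exp (∑' r, F (p ^ (r + 2))) := by
        refine prod_le_prod (fun p _ ↦ tsum_nonneg fun k ↦ hF₀ _) fun p hp ↦ ?_
        simpa only [pow_one] using tsum_le_one_add_mul_exp_tsum_add_two (fun k ↦ hF₀ _)
          (hpow (Nat.prime_of_mem_primesBelow hp)) (by rw [pow_zero, hF₁])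
    _ = (∏ p ∈ N.primesBelow, (1 + F p)) *
          Real.exp (∑ p ∈ N.primesBelow, ∑' r, F (p ^ (r + 2))) := by
        rw [prod_mul_distrib, Real.exp_sum]
    _ ≤ C * Real.log x ^ β * Real.exp S := by
        refine mul_le_mul hprod (Real.exp_le_exp.2 ?_) (Real.exp_pos _).le hCx
        exact sum_primesBelow_le_tsum_primes (f := fun p ↦ ∑' r, F (p ^ (r + 2)))
          (fun p ↦ tsum_nonneg fun r ↦ hF₀ _) hT N
    _ = C * Real.exp S * Real.log x ^ β := by ring

theorem stmt11 (g : ℕ → ℂ) (β : ℝ) (hg : IsMult g)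
    (hhigher : (∑' p : Nat.Primes, ∑' r : ℕ,
        (‖g ((p : ℕ) ^ (r + 2))‖₊ : ℝ≥0∞) / (((p : ℕ) ^ (r + 2) : ℕ) : ℝ≥0∞)) < ⊤)
    (hβ0 : 0 ≤ β) (hC : CondC g β) :
    ∃ C : ℝ, ∀ x : ℝ, 2 ≤ x →
      (∑ m ∈ Finset.Icc 1 ⌊x⌋₊, ‖g m‖ / (m : ℝ)) ≤ C * Real.log x ^ β :=
  stmt11_general g β hg hhigher hC
end

section
/- Suppose g : ℕ → ℂ satisfies Condition (A) for some complex number κ. Then the tail sum ∑_{p > x} (g(p) − κ)/p^{s+1} converges for every real s ≥ 0 and satisfies ∑_{p > x} (g(p) − κ)/p^{s+1} ≪_g 1/(x^s log x) uniformly for all s ≥ 0 and all x ≥ 2. -/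
open Filter Finset

/-!
Write `a p = (g p - κ) log p / p` and `φ t = (t ^ s * log t)⁻¹`, so that the tail is
`∑_{p > x} φ p • a p`. Mertens' estimate `∑_{p ≤ n} log p / p = log n + O(1)`, which follows from
Legendre's formula for `n!` and Chebyshev's bound `θ n ≤ n log 4`, turns condition (A) into a
uniform bound `M` on the partial sums of `a` over primes. Since `φ` is positive, decreasing on
`(1, ∞)` and tends to `0`, Abel summation (Dirichlet's test) makes the tail converge, with norm at
most `2 M φ x`.
-/

open Real

theorem summable_log_natCast_div_sq : Summable fun n : ℕ => log n / (n : ℝ) ^ 2 := by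
  have h_le (n : ℕ) : log n / (n : ℝ) ^ 2 ≤ 2 * ((n : ℝ) ^ (3 / 2 : ℝ))⁻¹ := by
    rcases n.eq_zero_or_pos with rfl | hn
    · simp
    have hn : (0 : ℝ) < n := by exact_mod_cast hn
    have hlog : log n ≤ 2 * (n : ℝ) ^ (1 / 2 : ℝ) := by
      have := log_le_rpow_div hn.le (by norm_num : (0 : ℝ) < 1 / 2)
      linarith
    have hsq : (n : ℝ) ^ 2 = (n : ℝ) ^ (1 / 2 : ℝ) * (n : ℝ) ^ (3 / 2 : ℝ) := by
      rw [← rpow_add hn, ← rpow_natCast]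
      norm_num
    rw [hsq, ← div_eq_mul_inv, div_le_div_iff₀ (by positivity) (by positivity)]
    nlinarith [rpow_pos_of_pos hn (3 / 2 : ℝ)]
  exact .of_nonneg_of_le (fun n => by positivity) h_le
    (((summable_nat_rpow_inv (p := 3 / 2)).2 (by norm_num)).mul_left 2)

namespace Nat

theorem log_factorial_eq_sum_primesLE (n : ℕ) :
    Real.log (n ! : ℕ) = ∑ p ∈ primesLE n, ((n !).factorization p : ℝ) * Real.log p := by
  rw [log_nat_eq_sum_factorization, Finsupp.sum]
  refine sum_subset (fun p hp => ?_) (fun p _ hp => ?_)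
  · rw [support_factorization] at hp
    have hp' := prime_of_mem_primeFactors hp
    exact mem_primesLE.2 ⟨(hp'.dvd_factorial).1 (dvd_of_mem_primeFactors hp), hp'⟩
  · simp [Finsupp.notMem_support_iff.1 hp]

theorem div_sub_one_le_factorization_factorial {p : ℕ} (hp : p.Prime) (n : ℕ) :
    (n : ℝ) / p - 1 ≤ (n !).factorization p := by
  have h_floor : (n : ℝ) / p - 1 ≤ (n / p : ℕ) := by
    rw [← floor_div_eq_div (K := ℝ)]
    exact (sub_one_lt_floor _).le
  have h_legendre : n / p ≤ (n !).factorization p := by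
    rw [factorization_factorial hp (b := n + 2) (by have := log_le_self p n; omega)]
    simpa using single_le_sum (f := fun i => n / p ^ i) (fun _ _ => Nat.zero_le _)
      (by simp : 1 ∈ Ico 1 (n + 2))
  exact h_floor.trans (by exact_mod_cast h_legendre)

theorem factorization_factorial_le_div_sub_one {p : ℕ} (hp : p.Prime) (n : ℕ) :
    ((n !).factorization p : ℝ) ≤ n / (p - 1) := by
  have hp1 : (1 : ℝ) < p := by exact_mod_cast hp.one_lt
  have h : (p - 1) * (n !).factorization p ≤ n := by
    rw [sub_one_mul_factorization_factorial hp]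
    exact Nat.sub_le _ _
  have h' : ((p - 1 : ℕ) : ℝ) * (n !).factorization p ≤ n := by exact_mod_cast h
  rw [cast_sub hp.one_le, cast_one] at h'
  rw [le_div_iff₀ (by linarith), mul_comm]
  exact h'

theorem sum_primesLE_log_div_le (n : ℕ) :
    ∑ p ∈ primesLE n, Real.log p / p ≤ Real.log n + Real.log 4 := by
  rcases n.eq_zero_or_pos with rfl | hn
  · simp [Real.log_nonneg]
  have hn : (0 : ℝ) < n := by exact_mod_cast hn
  have h_factorial : Real.log (n ! : ℕ) ≤ n * Real.log n := by
    rw [← Real.log_pow, ← cast_pow]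
    exact Real.log_le_log (by exact_mod_cast n.factorial_pos)
      (by exact_mod_cast n.factorial_le_pow)
  have h_theta : ∑ p ∈ primesLE n, Real.log p ≤ n * Real.log 4 := by
    rw [← Chebyshev.theta_eq_sum_primesLE_log, mul_comm]
    exact Chebyshev.theta_le_log4_mul_x hn.le
  have h_legendre : n * ∑ p ∈ primesLE n, Real.log p / p
      ≤ Real.log (n ! : ℕ) + ∑ p ∈ primesLE n, Real.log p := by
    rw [log_factorial_eq_sum_primesLE, mul_sum, ← sum_add_distrib]
    refine sum_le_sum fun p hp => ?_
    have hp := prime_of_mem_primesLE hp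
    have h_nu := div_sub_one_le_factorization_factorial hp n
    have h_log : 0 ≤ Real.log p := Real.log_natCast_nonneg p
    calc n * (Real.log p / p) = (n / p) * Real.log p := by ring
      _ ≤ ((n !).factorization p + 1) * Real.log p := by gcongr; linarith
      _ = _ := by ring
  rw [← mul_le_mul_iff_right₀ hn]
  linarith

theorem log_sub_le_sum_primesLE_log_div {n : ℕ} (hn : n ≠ 0) :
    Real.log n - 1 - 2 * ∑' k : ℕ, Real.log k / (k : ℝ) ^ 2
      ≤ ∑ p ∈ primesLE n, Real.log p / p := by
  have hn : (0 : ℝ) < n := by exact_mod_cast pos_of_ne_zero hn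
  have h_factorial : n * Real.log n - n ≤ Real.log (n ! : ℕ) := by
    have h_stirling := Stirling.le_log_factorial_stirling (n := n) (by positivity)
    have h_log_n : 0 ≤ Real.log n := Real.log_natCast_nonneg n
    have h_log_2pi : 0 ≤ Real.log (2 * π) := Real.log_nonneg (by linarith [pi_gt_three])
    linarith
  have h_tail : ∑ p ∈ primesLE n, Real.log p / (p : ℝ) ^ 2 ≤ ∑' k : ℕ, Real.log k / (k : ℝ) ^ 2 :=
    summable_log_natCast_div_sq.sum_le_tsum _ fun k _ => by positivity
  have h_legendre : Real.log (n ! : ℕ) ≤ n * ∑ p ∈ primesLE n, Real.log p / p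
      + 2 * n * ∑ p ∈ primesLE n, Real.log p / (p : ℝ) ^ 2 := by
    rw [log_factorial_eq_sum_primesLE, mul_sum, mul_sum, ← sum_add_distrib]
    refine sum_le_sum fun p hp => ?_
    have hp := prime_of_mem_primesLE hp
    have hp2 : (2 : ℝ) ≤ p := by exact_mod_cast hp.two_le
    have h_inv_sub_one : (n : ℝ) / (p - 1) ≤ n / p + 2 * n / p ^ 2 := by
      rw [div_add_div _ _ (by positivity) (by positivity), div_le_div_iff₀ (by linarith)
        (by positivity)]
      nlinarith [mul_nonneg (mul_nonneg hn.le (by positivity : (0 : ℝ) ≤ p)) (sub_nonneg.2 hp2)]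
    have h_nu := (factorization_factorial_le_div_sub_one hp n).trans h_inv_sub_one
    have h_log : 0 ≤ Real.log p := Real.log_natCast_nonneg p
    calc ((n !).factorization p : ℝ) * Real.log p ≤ (n / p + 2 * n / p ^ 2) * Real.log p := by
          gcongr
      _ = _ := by ring
  rw [← mul_le_mul_iff_right₀ hn]
  nlinarith

theorem exists_abs_sum_primesLE_log_div_sub_log_le :
    ∃ C, ∀ n : ℕ, |∑ p ∈ primesLE n, Real.log p / p - Real.log n| ≤ C := by
  set B := 1 + 2 * ∑' k : ℕ, Real.log k / (k : ℝ) ^ 2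
  refine ⟨max (Real.log 4) B, fun n => ?_⟩
  rcases eq_or_ne n 0 with rfl | hn
  · simp [Real.log_nonneg]
  have h_upper := sum_primesLE_log_div_le n
  have h_lower := log_sub_le_sum_primesLE_log_div hn
  rw [abs_le]
  constructor <;> linarith [le_max_left (Real.log 4) B, le_max_right (Real.log 4) B]

end Nat

section PartialSummation

variable {E : Type*} [NormedAddCommGroup E]

theorem norm_sum_range_filter_le_le_two_mul {f : ℕ → E} {M : ℝ}
    (hf : ∀ n, ‖∑ i ∈ range n, f i‖ ≤ M) (m n : ℕ) :
    ‖∑ i ∈ range n with m ≤ i, f i‖ ≤ 2 * M := by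
  rcases le_total m n with hmn | hnm
  · have h_Ico : (range n).filter (m ≤ ·) = Ico m n := by
      ext i
      simp only [mem_filter, mem_range, mem_Ico]
      omega
    rw [h_Ico, sum_Ico_eq_sub f hmn, two_mul]
    exact (norm_sub_le _ _).trans (add_le_add (hf n) (hf m))
  · rw [filter_false_of_mem fun i hi => by simp at hi; omega, sum_empty, norm_zero]
    linarith [(norm_nonneg _).trans (hf 0)]

variable [NormedSpace ℝ E] {w : ℕ → ℝ} {z : ℕ → E} {b : ℝ}

theorem Antitone.norm_sum_range_smul_le (hw : Antitone w) (hw_nonneg : ∀ n, 0 ≤ w n)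
    (hz : ∀ n, ‖∑ i ∈ range n, z i‖ ≤ b) (n : ℕ) :
    ‖∑ i ∈ range n, w i • z i‖ ≤ b * w 0 := by
  have hdiff : ∀ i, 0 ≤ w i - w (i + 1) := fun i => sub_nonneg.2 (hw i.le_succ)
  rw [sum_range_by_parts]
  calc ‖w (n - 1) • ∑ i ∈ range n, z i
        - ∑ i ∈ range (n - 1), (w (i + 1) - w i) • ∑ j ∈ range (i + 1), z j‖
      ≤ w (n - 1) * b + ∑ i ∈ range (n - 1), (w i - w (i + 1)) * b := by
        refine (norm_sub_le _ _).trans (add_le_add ?_ ((norm_sum_le _ _).trans ?_))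
        · rw [norm_smul, Real.norm_of_nonneg (hw_nonneg _)]
          exact mul_le_mul_of_nonneg_left (hz n) (hw_nonneg _)
        · refine sum_le_sum fun i _ => ?_
          rw [norm_smul, ← norm_neg, neg_sub, Real.norm_of_nonneg (hdiff i)]
          exact mul_le_mul_of_nonneg_left (hz _) (hdiff i)
    _ = b * w 0 := by
        rw [← sum_mul, sum_range_sub' w]
        ring

theorem Antitone.exists_tendsto_sum_range_smul_norm_le [CompleteSpace E] (hw : Antitone w)
    (hw_lim : Tendsto w atTop (nhds 0)) (hz : ∀ n, ‖∑ i ∈ range n, z i‖ ≤ b) :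
    ∃ L, Tendsto (fun n => ∑ i ∈ range n, w i • z i) atTop (nhds L) ∧ ‖L‖ ≤ b * w 0 := by
  obtain ⟨L, hL⟩ := cauchySeq_tendsto_of_complete
    (hw.cauchySeq_series_mul_of_tendsto_zero_of_bounded hw_lim hz)
  exact ⟨L, hL, le_of_tendsto' hL.norm
    (hw.norm_sum_range_smul_le (hw.le_of_tendsto hw_lim) hz)⟩

theorem exists_tendsto_sum_primes_gt_smul_norm_le [CompleteSpace E] {a : ℕ → E} {M : ℝ}
    (ha : ∀ n, ‖∑ p ∈ Nat.primesLE n, a p‖ ≤ M) {φ : ℝ → ℝ} {x : ℝ} (hx : 0 ≤ x)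
    (hφ : AntitoneOn φ (Set.Ici x)) (hφ_lim : Tendsto φ atTop (nhds 0)) :
    ∃ L, Tendsto (fun N : ℕ =>
      ∑ p ∈ (range N).filter (fun p : ℕ => p.Prime ∧ x < (p : ℝ)), φ p • a p) atTop (nhds L) ∧
      ‖L‖ ≤ 2 * M * φ x := by
  set b : ℕ → E := fun n => if n.Prime then a n else 0
  have hb : ∀ n, ‖∑ i ∈ range n, b i‖ ≤ M := fun n => by
    rw [← sum_filter, ← Nat.primesBelow_eq_filter_range, Nat.primesBelow_eq_primesLE_sub_one]
    exact ha _
  -- clamping at `x` makes the weight antitone on all of `ℕ` without changing it on `p > x`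
  set w : ℕ → ℝ := fun n => φ (max n x)
  set z : ℕ → E := fun n => if x < n then b n else 0
  have hz : ∀ n, ‖∑ i ∈ range n, z i‖ ≤ 2 * M := fun n => by
    have h_floor : ∀ i : ℕ, x < i ↔ ⌊x⌋₊ + 1 ≤ i := fun i =>
      (Nat.floor_lt hx).symm.trans Nat.lt_iff_add_one_le
    rw [← sum_filter, filter_congr fun i _ => h_floor i]
    exact norm_sum_range_filter_le_le_two_mul hb _ n
  have hw : Antitone w := fun m n hmn =>
    hφ (Set.mem_Ici.2 (le_max_right _ _)) (Set.mem_Ici.2 (le_max_right _ _))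
      (max_le_max_right x (by exact_mod_cast hmn))
  have hw_lim : Tendsto w atTop (nhds 0) :=
    hφ_lim.comp (tendsto_atTop_mono (fun n => le_max_left _ _) tendsto_natCast_atTop_atTop)
  obtain ⟨L, hL, hL_norm⟩ := hw.exists_tendsto_sum_range_smul_norm_le hw_lim hz
  refine ⟨L, hL.congr fun N => ?_, by simpa [w, hx] using hL_norm⟩
  rw [sum_filter]
  refine sum_congr rfl fun n _ => ?_
  by_cases hxn : x < n
  · by_cases hn : n.Prime <;> simp [w, z, b, hxn, hn, max_eq_left hxn.le]
  · simp [z, hxn]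

end PartialSummation

theorem primesLE_natCast (n : ℕ) : primesLE (n : ℝ) = Nat.primesLE n := by
  rw [primesLE, Nat.floor_natCast]
  rfl

theorem CondA.exists_norm_sum_primesLE_le {g : ℕ → ℂ} {κ : ℂ} (hA : CondA g κ) :
    ∃ M, ∀ n : ℕ, ‖∑ p ∈ Nat.primesLE n, (g p - κ) * Real.log p / p‖ ≤ M := by
  obtain ⟨C, hC⟩ := hA
  obtain ⟨D, hD⟩ := Nat.exists_abs_sum_primesLE_log_div_sub_log_le
  have hC0 : 0 ≤ C := (norm_nonneg _).trans (hC 2 le_rfl)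
  have hD0 : 0 ≤ D := (abs_nonneg _).trans (hD 0)
  refine ⟨C + ‖κ‖ * D, fun n => ?_⟩
  rcases lt_or_ge n 2 with hn | hn
  · interval_cases n <;> simp <;> positivity
  have h_split : ∑ p ∈ Nat.primesLE n, (g p - κ) * Real.log p / p
      = (∑ p ∈ primesLE (n : ℝ), g p * Real.log p / p - κ * Real.log n)
        - κ * ((∑ p ∈ Nat.primesLE n, Real.log p / p - Real.log n : ℝ) : ℂ) := by
    rw [primesLE_natCast]
    push_cast
    rw [mul_sub, mul_sum, sub_sub_sub_cancel_right, ← sum_sub_distrib]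
    exact sum_congr rfl fun p _ => by ring
  rw [h_split]
  refine (norm_sub_le _ _).trans (add_le_add (hC n (by exact_mod_cast hn)) ?_)
  rw [norm_mul, Complex.norm_real, Real.norm_eq_abs]
  exact mul_le_mul_of_nonneg_left (hD n) (norm_nonneg κ)

theorem antitoneOn_inv_rpow_mul_log {s : ℝ} (hs : 0 ≤ s) :
    AntitoneOn (fun t : ℝ => (t ^ s * log t)⁻¹) (Set.Ioi 1) := by
  intro a ha b _ hab
  have ha0 : 0 < a := one_pos.trans ha
  have : 0 < a ^ s * log a := mul_pos (rpow_pos_of_pos ha0 s) (log_pos ha)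
  exact inv_anti₀ this (mul_le_mul (rpow_le_rpow ha0.le hab hs) (log_le_log ha0 hab)
    (log_pos ha).le (rpow_nonneg (ha0.trans_le hab).le s))

theorem tendsto_inv_rpow_mul_log_atTop {s : ℝ} (hs : 0 ≤ s) :
    Tendsto (fun t : ℝ => (t ^ s * log t)⁻¹) atTop (nhds 0) := by
  refine Tendsto.inv_tendsto_atTop (tendsto_atTop_mono' atTop ?_ tendsto_log_atTop)
  filter_upwards [eventually_ge_atTop 1] with t ht
  exact le_mul_of_one_le_left (log_nonneg ht) (one_le_rpow ht hs)

theorem inv_rpow_mul_log_smul_mul_log_div {t : ℝ} (ht : 1 < t) (s : ℝ) (z : ℂ) :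
    (t ^ s * log t)⁻¹ • (z * log t / t) = z / (t : ℂ) ^ ((s : ℂ) + 1) := by
  have ht0 : 0 < t := one_pos.trans ht
  have hlog : (log t : ℂ) ≠ 0 := Complex.ofReal_ne_zero.2 (log_pos ht).ne'
  have ht0' : (t : ℂ) ≠ 0 := Complex.ofReal_ne_zero.2 ht0.ne'
  have hts : ((t ^ s : ℝ) : ℂ) ≠ 0 := Complex.ofReal_ne_zero.2 (rpow_pos_of_pos ht0 s).ne'
  rw [Complex.cpow_add _ _ ht0', Complex.cpow_one, Complex.real_smul, ← Complex.ofReal_cpow ht0.le]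
  push_cast
  field_simp

theorem stmt14 (g : ℕ → ℂ) (κ : ℂ) (hA : CondA g κ) :
    ∃ C : ℝ, ∀ s : ℝ, 0 ≤ s → ∀ x : ℝ, 2 ≤ x →
      ∃ L : ℂ,
        Tendsto
          (fun N : ℕ =>
            ∑ p ∈ (Finset.range N).filter (fun p => Nat.Prime p ∧ x < (p : ℝ)),
              (g p - κ) / ((p : ℂ) ^ ((s : ℂ) + 1)))
          atTop (nhds L) ∧
        ‖L‖ ≤ C / (x ^ s * Real.log x) := by
  obtain ⟨M, hM⟩ := hA.exists_norm_sum_primesLE_le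
  refine ⟨2 * M, fun s hs x hx => ?_⟩
  have hx1 : 1 < x := by linarith
  obtain ⟨L, hL, hL_norm⟩ := exists_tendsto_sum_primes_gt_smul_norm_le hM (by linarith)
    ((antitoneOn_inv_rpow_mul_log hs).mono (Set.Ici_subset_Ioi.2 hx1))
    (tendsto_inv_rpow_mul_log_atTop hs)
  refine ⟨L, hL.congr fun N => sum_congr rfl fun p hp => ?_, by rwa [div_eq_mul_inv]⟩
  have hp1 : (1 : ℝ) < p := hx1.trans (mem_filter.1 hp).2.2
  exact_mod_cast inv_rpow_mul_log_smul_mul_log_div hp1 s (g p - κ)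
end
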